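/- arXiv:1509.03772 — 2 statements merged into one kernel-verified Lean document; each statement's English description precedes it below -/
import Mathlib

section
/- The group with presentation ⟨b, c | cbc = bcb, [b, c³] = 1, (b⁻¹cb²)²c = 1⟩ is cyclic of order 5. -/
/-!
In any group, elements `b, c` satisfying the three relations are equal and of order dividing 5:
the braid relation turns `(b⁻¹cb²)²c = 1` into `cb³c = 1`, so `c = c³b³` commutes with `b`, and the
braid relation for commuting elements reads `c²b = b²c`, i.e. `c = b`. Hence the presented group is
generated by `b` with `b⁵ = 1`, and `b ≠ 1` because both generators map to `1 ∈ ZMod 5`.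
-/

/-- Generators: `b = of 0`, `c = of 1`. -/
def rels1 : Set (FreeGroup (Fin 2)) :=
  let b := FreeGroup.of (0 : Fin 2)
  let c := FreeGroup.of (1 : Fin 2)
  {c * b * c * (b * c * b)⁻¹,
   b * c ^ 3 * b⁻¹ * (c ^ 3)⁻¹,
   (b⁻¹ * c * b ^ 2) ^ 2 * c}

open PresentedGroup Subgroup
open scoped commutatorElement

section

variable {G : Type*} [Group G] {b c : G}

theorem pow_three_eq_inv_sq_of_braid (braid : c * b * c = b * c * b)
    (h : (b⁻¹ * c * b ^ 2) ^ 2 * c = 1) : b ^ 3 = (c ^ 2)⁻¹ := by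
  have hcb : c * b ^ 3 * c = 1 := by
    calc c * b ^ 3 * c = b⁻¹ * (b * c * b) * b ^ 2 * c := by group
      _ = b⁻¹ * (c * b * c) * b ^ 2 * c := by rw [braid]
      _ = (b⁻¹ * c * b ^ 2) ^ 2 * c := by rw [sq (b⁻¹ * c * b ^ 2)]; group
      _ = 1 := h
  calc b ^ 3 = c⁻¹ * (c * b ^ 3 * c) * c⁻¹ := by group
    _ = (c ^ 2)⁻¹ := by rw [hcb]; group

theorem commute_of_pow_three_eq_inv_sq (hc3 : Commute b (c ^ 3)) (hb3 : b ^ 3 = (c ^ 2)⁻¹) :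
    Commute b c := by
  have hc : c = c ^ 3 * b ^ 3 := by rw [hb3]; group
  rw [hc]
  exact hc3.mul_right (Commute.self_pow b 3)

theorem eq_of_commute_of_braid (hbc : Commute b c) (braid : c * b * c = b * c * b) : c = b := by
  have : c * (c * b) = b * (c * b) := by
    rw [← hbc.eq, ← mul_assoc, braid, mul_assoc, hbc.eq]
  exact mul_right_cancel this

theorem eq_and_pow_five_eq_one_of_relations (braid : c * b * c = b * c * b)
    (hc3 : Commute b (c ^ 3)) (h : (b⁻¹ * c * b ^ 2) ^ 2 * c = 1) : c = b ∧ b ^ 5 = 1 := by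
  have hb3 := pow_three_eq_inv_sq_of_braid braid h
  have hcb := eq_of_commute_of_braid (commute_of_pow_three_eq_inv_sq hc3 hb3) braid
  refine ⟨hcb, ?_⟩
  calc b ^ 5 = b ^ 3 * b ^ 2 := by group
    _ = 1 := by rw [hb3, hcb]; group

theorem isCyclic_and_card_eq_of_zpowers_eq_top {p : ℕ} [Fact p.Prime] {g : G}
    (hg : zpowers g = ⊤) (hgp : g ^ p = 1) (hg1 : g ≠ 1) : IsCyclic G ∧ Nat.card G = p := by
  refine ⟨isCyclic_iff_exists_zpowers_eq_top.mpr ⟨g, hg⟩, ?_⟩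
  rw [← card_top, ← hg, Nat.card_zpowers, orderOf_eq_prime hgp hg1]

end

theorem PresentedGroup.zpowers_of_zero_eq_top {rels : Set (FreeGroup (Fin 2))}
    (h : (of 1 : PresentedGroup rels) = of 0) : zpowers (of 0 : PresentedGroup rels) = ⊤ := by
  have hrange : Set.range (of : Fin 2 → PresentedGroup rels) = {of 0} := by
    refine Set.eq_singleton_iff_unique_mem.mpr ⟨⟨0, rfl⟩, ?_⟩
    rintro _ ⟨i, rfl⟩
    fin_cases i
    exacts [rfl, h]
  rw [zpowers_eq_closure, ← hrange, closure_range_of]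

theorem rels1_of_one_eq_of_zero_and_pow_five :
    (of 1 : PresentedGroup rels1) = of 0 ∧ (of 0 : PresentedGroup rels1) ^ 5 = 1 := by
  set b : PresentedGroup rels1 := of 0
  set c : PresentedGroup rels1 := of 1
  have braid : c * b * c * (b * c * b)⁻¹ = 1 :=
    one_of_mem (x := .of 1 * .of 0 * .of 1 * (.of 0 * .of 1 * .of 0)⁻¹) (by simp [rels1])
  have hc3 : ⁅b, c ^ 3⁆ = 1 :=
    one_of_mem (x := .of 0 * .of 1 ^ 3 * (.of 0)⁻¹ * (.of 1 ^ 3)⁻¹) (by simp [rels1])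
  have h : (b⁻¹ * c * b ^ 2) ^ 2 * c = 1 :=
    one_of_mem (x := ((.of 0)⁻¹ * .of 1 * .of 0 ^ 2) ^ 2 * .of 1) (by simp [rels1])
  exact eq_and_pow_five_eq_one_of_relations (mul_inv_eq_one.mp braid)
    (commutatorElement_eq_one_iff_commute.mp hc3) h

def rels1ToZMod5 : PresentedGroup rels1 →* Multiplicative (ZMod 5) :=
  toGroup (f := fun _ => Multiplicative.ofAdd 1) (by
    rintro r (rfl | rfl | rfl) <;> simp only [map_mul, map_inv, map_pow, FreeGroup.lift_apply_of] <;>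
      decide)

theorem rels1ToZMod5_of (i : Fin 2) : rels1ToZMod5 (of i) = Multiplicative.ofAdd 1 :=
  toGroup.of _

/-- The group `⟨b, c | cbc = bcb, [b, c³] = 1, (b⁻¹cb²)²c = 1⟩` is cyclic of order 5. -/
theorem stmt_1 : IsCyclic (PresentedGroup rels1) ∧ Nat.card (PresentedGroup rels1) = 5 := by
  obtain ⟨hcb, hb5⟩ := rels1_of_one_eq_of_zero_and_pow_five
  have hb1 : (of 0 : PresentedGroup rels1) ≠ 1 :=
    ne_of_apply_ne rels1ToZMod5 (by rw [rels1ToZMod5_of, map_one rels1ToZMod5]; decide)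
  have : Fact (Nat.Prime 5) := ⟨Nat.prime_five⟩
  exact isCyclic_and_card_eq_of_zpowers_eq_top (zpowers_of_zero_eq_top hcb) hb5 hb1
end

section
/- For integers k ≥ 2 and r ≥ 3 with gcd(r, k) = 1, the free product Z_k * Z_r contains a non-abelian free subgroup; in fact its commutator subgroup is a free group of rank (k−1)(r−1). -/
/-!
The kernel of `toProd : A ∗ B →* A × B` is free on the commutators `⁅a, b⁆` with `a ≠ 1`,
`b ≠ 1`. The group `A ∗ B` acts on `A × B`, the cosets of this kernel, through `toProd`. The
Reidemeister–Schreier cocycle `c` of this action, with values in the free group on the pairs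
`(a, b)`, is `c (inl a) (u, v) = [u a⁻¹, v] [u, v]⁻¹` and `c (inr b) = 1`, where `[x, y]` is the
basis element `(x, y)`, or `1` if `x = 1` or `y = 1`. On the kernel `g ↦ c g 1` is a homomorphism
sending `⁅a, b⁆` to `[a, b]`, and by induction on `g` the commutator map sends `c g p` to
`ofProd (p * (toProd g)⁻¹) * g * (ofProd p)⁻¹`, where `ofProd (x, y) = x y`; so the two maps
are mutually inverse. For abelian factors the kernel is the commutator subgroup, and for `ℤ/k`, `ℤ/r` there
are `(k - 1)(r - 1) ≥ 2` basis pairs.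
-/

open scoped Monoid.Coprod commutatorElement

namespace Monoid.Coprod

section Group

variable {A B : Type*} [Group A] [Group B]

abbrev NontrivialPairs (A B : Type*) [Group A] [Group B] := {a : A // a ≠ 1} × {b : B // b ≠ 1}

def freeCommutators : FreeGroup (NontrivialPairs A B) →* A ∗ B :=
  FreeGroup.lift fun p => ⁅(inl p.1.1 : A ∗ B), inr p.2.1⁆

lemma toProd_freeCommutators (w : FreeGroup (NontrivialPairs A B)) :
    toProd (freeCommutators w) = 1 := by
  induction w using FreeGroup.induction_on with
  | C1 => simp
  | of p => ext <;> simp [freeCommutators, commutatorElement_def]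
  | inv_of p h => simp_all
  | mul x y hx hy => simp_all

open scoped Classical in
noncomputable def pairGen (a : A) (b : B) : FreeGroup (NontrivialPairs A B) :=
  if h : a ≠ 1 ∧ b ≠ 1 then .of (⟨a, h.1⟩, ⟨b, h.2⟩) else 1

@[simp] lemma pairGen_one_left (b : B) : pairGen (1 : A) b = 1 := by simp [pairGen]

@[simp] lemma pairGen_one_right (a : A) : pairGen a (1 : B) = 1 := by simp [pairGen]

lemma freeCommutators_pairGen (a : A) (b : B) :
    freeCommutators (pairGen a b) = ⁅(inl a : A ∗ B), inr b⁆ := by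
  by_cases h : a ≠ 1 ∧ b ≠ 1
  · simp [pairGen, h, freeCommutators]
  · obtain rfl | rfl : a = 1 ∨ b = 1 := by tauto
    all_goals simp

variable (A B) in
abbrev LabelledCosets := (A × B) × FreeGroup (NontrivialPairs A B)

noncomputable def cosetActionInl : A →* Equiv.Perm (LabelledCosets A B) where
  toFun a :=
    { toFun x :=
        ((x.1.1 * a⁻¹, x.1.2), pairGen (x.1.1 * a⁻¹) x.1.2 * (pairGen x.1.1 x.1.2)⁻¹ * x.2)
      invFun x :=
        ((x.1.1 * a, x.1.2), pairGen (x.1.1 * a) x.1.2 * (pairGen x.1.1 x.1.2)⁻¹ * x.2)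
      left_inv x := by simp [mul_assoc]
      right_inv x := by simp [mul_assoc] }
  map_one' := by ext x <;> simp
  map_mul' a a' := by ext x <;> simp [mul_assoc]

def cosetActionInr : B →* Equiv.Perm (LabelledCosets A B) where
  toFun b :=
    { toFun x := ((x.1.1, x.1.2 * b⁻¹), x.2)
      invFun x := ((x.1.1, x.1.2 * b), x.2)
      left_inv x := by simp
      right_inv x := by simp }
  map_one' := by ext x <;> simp
  map_mul' b b' := by ext x <;> simp [mul_assoc]

noncomputable def cosetAction : A ∗ B →* Equiv.Perm (LabelledCosets A B) :=
  lift cosetActionInl cosetActionInr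

@[simp] lemma cosetAction_inl (a : A) (x : LabelledCosets A B) :
    cosetAction (inl a) x =
      ((x.1.1 * a⁻¹, x.1.2), pairGen (x.1.1 * a⁻¹) x.1.2 * (pairGen x.1.1 x.1.2)⁻¹ * x.2) :=
  rfl

@[simp] lemma cosetAction_inr (b : B) (x : LabelledCosets A B) :
    cosetAction (inr b) x = ((x.1.1, x.1.2 * b⁻¹), x.2) :=
  rfl

noncomputable def cocycle (g : A ∗ B) (p : A × B) : FreeGroup (NontrivialPairs A B) :=
  (cosetAction g (p, 1)).2

lemma cosetAction_apply (g : A ∗ B) (p : A × B) (w : FreeGroup (NontrivialPairs A B)) :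
    cosetAction g (p, w) = (p * (toProd g)⁻¹, cocycle g p * w) := by
  induction g using induction_on generalizing p w with
  | inl a => simp [cocycle, mul_assoc, Prod.ext_iff]
  | inr b => simp [cocycle, Prod.ext_iff]
  | mul g h hg hh =>
    rw [cocycle, map_mul, Equiv.Perm.mul_apply, Equiv.Perm.mul_apply, hh, hh, hg, hg]
    simp [mul_assoc]

lemma cocycle_one (p : A × B) : cocycle 1 p = 1 := by simp [cocycle]

lemma cocycle_mul (g h : A ∗ B) (p : A × B) :
    cocycle (g * h) p = cocycle g (p * (toProd h)⁻¹) * cocycle h p := by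
  rw [cocycle, map_mul, Equiv.Perm.mul_apply, cosetAction_apply, cosetAction_apply, mul_one]

lemma cocycle_commutator (a : A) (b : B) :
    cocycle ⁅(inl a : A ∗ B), inr b⁆ 1 = pairGen a b := by
  simp [cocycle, commutatorElement_def, ← map_inv]

def ofProd (p : A × B) : A ∗ B := inl p.1 * inr p.2

lemma freeCommutators_cocycle (g : A ∗ B) (p : A × B) :
    freeCommutators (cocycle g p) = ofProd (p * (toProd g)⁻¹) * g * (ofProd p)⁻¹ := by
  induction g using induction_on generalizing p with
  | inl a =>
    simp only [cocycle, cosetAction_inl, mul_one, map_mul, map_inv, freeCommutators_pairGen,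
      ofProd, toProd_apply_inl, Prod.fst_mul, Prod.snd_mul, Prod.fst_inv, Prod.snd_inv, inv_one,
      commutatorElement_def]
    group
  | inr b =>
    simp only [cocycle, cosetAction_inr, map_one, ofProd, toProd_apply_inr, Prod.fst_mul,
      Prod.snd_mul, Prod.fst_inv, Prod.snd_inv, inv_one, mul_one, map_mul, map_inv]
    group
  | mul g h hg hh =>
    rw [cocycle_mul, map_mul, hg, hh, map_mul, mul_inv_rev, mul_assoc p]
    group

noncomputable def kerToProdCocycle :
    (toProd : A ∗ B →* A × B).ker →* FreeGroup (NontrivialPairs A B) where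
  toFun g := cocycle g.1 1
  map_one' := cocycle_one 1
  map_mul' g h := by simp [cocycle_mul, MonoidHom.mem_ker.1 h.2]

noncomputable def kerToProdEquivFreeGroup :
    (toProd : A ∗ B →* A × B).ker ≃* FreeGroup (NontrivialPairs A B) :=
  kerToProdCocycle.toMulEquiv (freeCommutators.codRestrict _ toProd_freeCommutators)
    (MonoidHom.ext fun g => Subtype.ext <| by
      change freeCommutators (cocycle g.1 1) = g.1
      simpa [ofProd, MonoidHom.mem_ker.1 g.2] using freeCommutators_cocycle g.1 1)
    (FreeGroup.ext_hom _ _ fun p => by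
      change cocycle (freeCommutators (.of p)) 1 = .of p
      simpa [freeCommutators, pairGen, p.1.2, p.2.2] using cocycle_commutator p.1.1 p.2.1)

lemma range_freeCommutators : freeCommutators.range = (toProd : A ∗ B →* A × B).ker := by
  refine le_antisymm (fun _ ⟨w, hw⟩ => hw ▸ toProd_freeCommutators w) fun g hg => ?_
  exact ⟨_, congrArg Subtype.val (kerToProdEquivFreeGroup.symm_apply_apply ⟨g, hg⟩)⟩

end Group

lemma commutator_eq_ker_toProd {A B : Type*} [CommGroup A] [CommGroup B] :
    commutator (A ∗ B) = (toProd : A ∗ B →* A × B).ker := by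
  refine le_antisymm (Abelianization.commutator_subset_ker _) ?_
  rw [← range_freeCommutators, commutator_eq_closure]
  exact FreeGroup.range_lift_le fun _ ⟨p, hp⟩ =>
    Subgroup.subset_closure (hp ▸ commutator_mem_commutatorSet _ _)

end Monoid.Coprod

theorem stmt_6_general (k r : ℕ) (hk : 2 ≤ k) (hr : 3 ≤ r) :
    (∃ f : FreeGroup (Fin 2) →*
        Monoid.Coprod (Multiplicative (ZMod k)) (Multiplicative (ZMod r)),
      Function.Injective f) ∧
    Nonempty
      ((commutator (Monoid.Coprod (Multiplicative (ZMod k)) (Multiplicative (ZMod r)))) ≃*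
        FreeGroup (Fin ((k - 1) * (r - 1)))) := by
  have : NeZero k := ⟨by omega⟩
  have : NeZero r := ⟨by omega⟩
  have hcard : Nat.card (Monoid.Coprod.NontrivialPairs (Multiplicative (ZMod k))
      (Multiplicative (ZMod r))) = (k - 1) * (r - 1) := by
    simp
  let e := (MulEquiv.subgroupCongr Monoid.Coprod.commutator_eq_ker_toProd).trans <|
    Monoid.Coprod.kerToProdEquivFreeGroup.trans
      (FreeGroup.freeGroupCongr (Finite.equivFinOfCardEq hcard))
  have hrank : 2 ≤ (k - 1) * (r - 1) := by
    have := Nat.mul_le_mul (show 1 ≤ k - 1 by omega) (show 2 ≤ r - 1 by omega)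
    omega
  refine ⟨⟨(commutator _).subtype.comp
    (e.symm.toMonoidHom.comp (FreeGroup.map (Fin.castLE hrank))), ?_⟩, ⟨e⟩⟩
  exact Subtype.val_injective.comp
    (e.symm.injective.comp (FreeGroup.map_injective (Fin.castLE_injective hrank)))

/-- For `k ≥ 2`, `r ≥ 3` with `gcd(r, k) = 1`, the free product `ℤ/k ∗ ℤ/r`
contains a non-abelian free subgroup; in fact its commutator subgroup is free
of rank `(k−1)(r−1)`. -/
theorem stmt_6 (k r : ℕ) (hk : 2 ≤ k) (hr : 3 ≤ r) (hgcd : Nat.gcd r k = 1) :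
    (∃ f : FreeGroup (Fin 2) →*
        Monoid.Coprod (Multiplicative (ZMod k)) (Multiplicative (ZMod r)),
      Function.Injective f) ∧
    Nonempty
      ((commutator (Monoid.Coprod (Multiplicative (ZMod k)) (Multiplicative (ZMod r)))) ≃*
        FreeGroup (Fin ((k - 1) * (r - 1)))) :=
  stmt_6_general k r hk hr
end
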